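/- arXiv:2107.00290 — 2 statements merged into one kernel-verified Lean document; each statement's English description precedes it below -/
import Mathlib

section
/- For the half Poisson kernel Ω(x,y) = (1/2) · sin(πx) / (cosh(πy) + cos(πx)), one has ∫_{-∞}^{∞} Ω(x,t) dt = x for every 0 ≤ x < 1. -/
/-!
With `a = π x / 2` and `b = π t / 2`, the double-angle formulas give
`Ω(x, t) = sin a cos a / (2 (sinh² b + cos² a))`, which is the `t`-derivative of
`arctan (tan a · tanh b) / π`. For `0 ≤ x < 1` this primitive increases from `-x/2` to `x/2`,
and a nonnegative derivative of a function with finite limits at `±∞` is integrable.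
-/

open Real

/-- The "half" Poisson kernel of the unit strip. -/
noncomputable def halfPoisson (x y : ℝ) : ℝ :=
  (1 / 2) * (Real.sin (Real.pi * x) / (Real.cosh (Real.pi * y) + Real.cos (Real.pi * x)))

open Filter Topology MeasureTheory Set

theorem integrable_deriv_of_nonneg {g g' : ℝ → ℝ} {m l : ℝ}
    (hderiv : ∀ x, HasDerivAt g (g' x) x) (hg' : ∀ x, 0 ≤ g' x)
    (hbot : Tendsto g atBot (𝓝 m)) (htop : Tendsto g atTop (𝓝 l)) : Integrable g' := by
  have hIoi : IntegrableOn g' (Ioi 0) :=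
    integrableOn_Ioi_deriv_of_nonneg' (fun x _ ↦ hderiv x) (fun x _ ↦ hg' x) htop
  have hIoi_neg : IntegrableOn (fun x ↦ g' (-x)) (Ioi 0) :=
    integrableOn_Ioi_deriv_of_nonneg' (g := fun x ↦ -g (-x))
      (fun x _ ↦ (((hderiv (-x)).comp x (hasDerivAt_neg x)).neg).congr_deriv (by ring))
      (fun x _ ↦ hg' (-x)) (hbot.comp tendsto_neg_atTop_atBot).neg
  have hIio : IntegrableOn g' (Iio 0) := by
    have hneg := (Measure.measurePreserving_neg (volume : Measure ℝ)).integrableOn_comp_preimage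
      measurableEmbedding_neg (f := g') (s := Iio 0)
    rw [← hneg]
    simpa [Function.comp_def] using hIoi_neg
  rw [← integrableOn_univ, ← Iio_union_Ici (a := (0 : ℝ)), integrableOn_union]
  exact ⟨hIio, (integrableOn_Ici_iff_integrableOn_Ioi).2 hIoi⟩

theorem Real.hasDerivAt_tanh (x : ℝ) : HasDerivAt tanh (1 / cosh x ^ 2) x := by
  have h := (hasDerivAt_sinh x).div (hasDerivAt_cosh x) (cosh_pos x).ne'
  rw [show sinh / cosh = tanh from funext fun y ↦ (tanh_eq_sinh_div_cosh y).symm] at h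
  refine h.congr_deriv ?_
  rw [← sq, ← sq, cosh_sq_sub_sinh_sq]

theorem Real.tendsto_tanh_atTop : Tendsto tanh atTop (𝓝 1) := by
  have hexp : Tendsto (fun x ↦ exp (-(2 * x))) atTop (𝓝 0) :=
    tendsto_exp_atBot.comp (tendsto_neg_atTop_atBot.comp (tendsto_id.const_mul_atTop two_pos))
  have h : Tendsto (fun x ↦ (1 - exp (-(2 * x))) / (1 + exp (-(2 * x)))) atTop
      (𝓝 ((1 - 0) / (1 + 0))) :=
    (tendsto_const_nhds.sub hexp).div (tendsto_const_nhds.add hexp) (by norm_num)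
  rw [sub_zero, add_zero, div_one] at h
  refine h.congr fun x ↦ ?_
  rw [tanh_eq, show exp (-(2 * x)) = exp (-x) / exp x by rw [← exp_sub]; ring_nf]
  field_simp

theorem Real.tendsto_tanh_atBot : Tendsto tanh atBot (𝓝 (-1)) := by
  simpa [Function.comp_def, tanh_neg] using (tendsto_tanh_atTop.comp tendsto_neg_atBot_atTop).neg

theorem halfPoisson_eq (x t : ℝ) :
    halfPoisson x t = sin (π * x / 2) * cos (π * x / 2) /
      (2 * (sinh (π * t / 2) ^ 2 + cos (π * x / 2) ^ 2)) := by
  have hsin : sin (π * x) = 2 * sin (π * x / 2) * cos (π * x / 2) := by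
    rw [← sin_two_mul]; ring_nf
  have hden : cosh (π * t) + cos (π * x) = 2 * (sinh (π * t / 2) ^ 2 + cos (π * x / 2) ^ 2) := by
    conv_lhs => rw [show π * t = 2 * (π * t / 2) by ring, show π * x = 2 * (π * x / 2) by ring]
    rw [cosh_two_mul, cos_two_mul, cosh_sq]
    ring
  rw [halfPoisson, hsin, hden]
  ring

theorem halfPoisson_nonneg {x : ℝ} (hx0 : 0 ≤ x) (hx1 : x ≤ 1) (t : ℝ) : 0 ≤ halfPoisson x t := by
  have hπ := pi_pos
  rw [halfPoisson_eq]
  have : 0 ≤ sin (π * x / 2) := sin_nonneg_of_nonneg_of_le_pi (by positivity) (by nlinarith)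
  have : 0 ≤ cos (π * x / 2) := cos_nonneg_of_mem_Icc ⟨by nlinarith, by nlinarith⟩
  positivity

noncomputable def halfPoissonPrimitive (x t : ℝ) : ℝ :=
  arctan (tan (π * x / 2) * tanh (π * t / 2)) / π

theorem hasDerivAt_halfPoissonPrimitive {x : ℝ} (hx : cos (π * x / 2) ≠ 0) (t : ℝ) :
    HasDerivAt (halfPoissonPrimitive x) (halfPoisson x t) t := by
  have hb : HasDerivAt (fun t ↦ π * t / 2) (π / 2) t := by
    simpa using ((hasDerivAt_id t).const_mul π).div_const 2
  have h := (((hasDerivAt_tanh _).comp t hb).const_mul (tan (π * x / 2))).arctan.div_const π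
  simp only [Function.comp_def] at h
  refine h.congr_deriv ?_
  have hch := (cosh_pos (π * t / 2)).ne'
  have hπ := pi_pos.ne'
  rw [halfPoisson_eq, tan_eq_sin_div_cos, tanh_eq_sinh_div_cosh]
  field_simp
  linear_combination -(sin (π * x / 2) * cos (π * x / 2) ^ 2) * cosh_sq_sub_sinh_sq (π * t / 2) -
    sin (π * x / 2) * sinh (π * t / 2) ^ 2 * sin_sq_add_cos_sq (π * x / 2)

theorem tendsto_halfPoissonPrimitive_atTop (x : ℝ) :
    Tendsto (halfPoissonPrimitive x) atTop (𝓝 (arctan (tan (π * x / 2)) / π)) := by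
  have hb : Tendsto (fun t ↦ π * t / 2) atTop atTop :=
    (tendsto_id.const_mul_atTop pi_pos).atTop_div_const two_pos
  have h := ((continuous_arctan.tendsto _).comp
    ((tendsto_tanh_atTop.comp hb).const_mul (tan (π * x / 2)))).div_const π
  simp only [Function.comp_def, mul_one] at h
  exact h

theorem tendsto_halfPoissonPrimitive_atBot (x : ℝ) :
    Tendsto (halfPoissonPrimitive x) atBot (𝓝 (-(arctan (tan (π * x / 2)) / π))) := by
  have hb : Tendsto (fun t ↦ π * t / 2) atBot atBot :=
    (tendsto_id.const_mul_atBot pi_pos).atBot_div_const two_pos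
  have h := ((continuous_arctan.tendsto _).comp
    ((tendsto_tanh_atBot.comp hb).const_mul (tan (π * x / 2)))).div_const π
  simp only [Function.comp_def, mul_neg, mul_one, arctan_neg, neg_div] at h
  exact h

theorem stmt2 (x : ℝ) (hx0 : 0 ≤ x) (hx1 : x < 1) :
    ∫ t : ℝ, halfPoisson x t = x := by
  have hπ := pi_pos
  have ha : π * x / 2 ∈ Ioo (-(π / 2)) (π / 2) := ⟨by nlinarith, by nlinarith⟩
  have hlim : arctan (tan (π * x / 2)) / π = x / 2 := by
    rw [arctan_tan ha.1 ha.2]; field_simp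
  have hderiv := hasDerivAt_halfPoissonPrimitive (cos_pos_of_mem_Ioo ha).ne'
  have hbot := tendsto_halfPoissonPrimitive_atBot x
  have htop := tendsto_halfPoissonPrimitive_atTop x
  rw [hlim] at hbot htop
  have hint := integrable_deriv_of_nonneg hderiv (halfPoisson_nonneg hx0 hx1.le) hbot htop
  rw [integral_of_hasDerivAt_of_tendsto hderiv hint hbot htop]
  ring
end

section
/- A map f from an open set U ⊆ ℂ into a complex Banach space B is analytic (norm-differentiable) if and only if for every bounded linear functional Λ on B, the scalar function z ↦ Λ(f(z)) is analytic on U. -/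
/-!
Only the converse needs an argument. Near `z₀ ∈ U`, each `Λ ∘ f` is holomorphic, so its
difference quotient `dslope (Λ ∘ f) z₀` is holomorphic too and hence Lipschitz on a closed disc
around `z₀`. Thus `Λ ∘ slope f z₀` is Lipschitz on the punctured disc for every `Λ`, and the
uniform boundedness principle, applied to the normalized differences of `slope f z₀`, makes
`slope f z₀` itself Lipschitz there. It is then Cauchy as `z → z₀`, and converges because `B` is
complete.
-/

open Metric Set Filter Topology NormedSpace

theorem exists_norm_le_of_forall_exists_norm_dual_le {𝕜 E ι : Type*} [RCLike 𝕜]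
    [NormedAddCommGroup E] [NormedSpace 𝕜 E] {v : ι → E}
    (h : ∀ Λ : StrongDual 𝕜 E, ∃ C, ∀ i, ‖Λ (v i)‖ ≤ C) : ∃ M, ∀ i, ‖v i‖ ≤ M := by
  obtain ⟨M, hM⟩ := banach_steinhaus (g := fun i ↦ inclusionInDoubleDual 𝕜 E (v i)) h
  exact ⟨M, fun i ↦ (inclusionInDoubleDualLi 𝕜).norm_map (v i) ▸ hM i⟩

theorem exists_lipschitzOnWith_of_forall_dual {𝕜 α E : Type*} [RCLike 𝕜] [MetricSpace α]
    [NormedAddCommGroup E] [NormedSpace 𝕜 E] {g : α → E} {t : Set α}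
    (h : ∀ Λ : StrongDual 𝕜 E, ∃ C, LipschitzOnWith C (fun x ↦ Λ (g x)) t) :
    ∃ C, LipschitzOnWith C g t := by
  let v : t × t → E := fun p ↦ ((dist (p.1 : α) p.2 : 𝕜))⁻¹ • (g p.1 - g p.2)
  have hv : ∀ Λ : StrongDual 𝕜 E, ∃ C, ∀ p, ‖Λ (v p)‖ ≤ C := by
    intro Λ
    obtain ⟨C, hC⟩ := h Λ
    refine ⟨C, fun ⟨⟨x, hx⟩, ⟨y, hy⟩⟩ ↦ ?_⟩
    rcases eq_or_ne x y with rfl | hxy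
    · simp [v]
    · simp only [v, map_smul, map_sub, norm_smul, norm_inv, RCLike.norm_ofReal, abs_dist,
        ← dist_eq_norm, inv_mul_le_iff₀ (dist_pos.mpr hxy)]
      exact mul_comm (C : ℝ) _ ▸ hC.dist_le_mul x hx y hy
  obtain ⟨M, hM⟩ := exists_norm_le_of_forall_exists_norm_dual_le hv
  refine ⟨M.toNNReal, LipschitzOnWith.of_dist_le' fun x hx y hy ↦ ?_⟩
  rcases eq_or_ne x y with rfl | hxy
  · simp
  · simpa only [v, norm_smul, norm_inv, RCLike.norm_ofReal, abs_dist, ← dist_eq_norm,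
      inv_mul_le_iff₀ (dist_pos.mpr hxy), mul_comm M] using hM ⟨⟨x, hx⟩, ⟨y, hy⟩⟩

theorem DifferentiableOn.exists_lipschitzOnWith_dslope {E : Type*} [NormedAddCommGroup E]
    [NormedSpace ℂ E] [CompleteSpace E] {g : ℂ → E} {z₀ : ℂ} {s K : Set ℂ}
    (hg : DifferentiableOn ℂ g s) (hs : IsOpen s) (hz₀ : z₀ ∈ s) (hKs : K ⊆ s)
    (hK : IsCompact K) (hKc : Convex ℝ K) : ∃ C, LipschitzOnWith C (dslope g z₀) K := by
  have hdslope := (Complex.differentiableOn_dslope (hs.mem_nhds hz₀)).mpr hg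
  exact (((hdslope.contDiffOn hs (n := 1)).restrict_scalars ℝ).mono hKs).exists_lipschitzOnWith
    one_ne_zero hKc hK

theorem differentiableAt_of_uniformContinuousOn_slope {𝕜 E : Type*} [NontriviallyNormedField 𝕜]
    [NormedAddCommGroup E] [NormedSpace 𝕜 E] [CompleteSpace E] {f : 𝕜 → E} {x : 𝕜} {s : Set 𝕜}
    (hs : s ∈ 𝓝[≠] x) (hf : UniformContinuousOn (slope f x) s) : DifferentiableAt 𝕜 f x := by
  have hcauchy : Cauchy (map (slope f x) (𝓝[≠] x)) :=
    (cauchy_nhds.mono nhdsWithin_le_nhds).map_of_le hf (le_principal_iff.mpr hs)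
  obtain ⟨L, hL⟩ := CompleteSpace.complete hcauchy
  exact (hasDerivAt_iff_tendsto_slope.mpr hL).differentiableAt

theorem stmt9 {B : Type*} [NormedAddCommGroup B] [NormedSpace ℂ B] [CompleteSpace B]
    (U : Set ℂ) (hU : IsOpen U) (f : ℂ → B) :
    DifferentiableOn ℂ f U ↔
      ∀ Λ : B →L[ℂ] ℂ, DifferentiableOn ℂ (fun z => Λ (f z)) U := by
  refine ⟨fun hf Λ ↦ Λ.differentiable.comp_differentiableOn hf, fun h z₀ hz₀ ↦ ?_⟩
  obtain ⟨r, hr, hrU⟩ := isOpen_iff.mp hU z₀ hz₀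
  set K := closedBall z₀ (r / 2)
  have hKU : K ⊆ U := (closedBall_subset_ball (half_lt_self hr)).trans hrU
  have hlip : ∃ C, LipschitzOnWith C (slope f z₀) (K \ {z₀}) := by
    refine exists_lipschitzOnWith_of_forall_dual (𝕜 := ℂ) fun Λ ↦ ?_
    obtain ⟨C, hC⟩ := (h Λ).exists_lipschitzOnWith_dslope hU hz₀ hKU (isCompact_closedBall _ _)
      (convex_closedBall _ _)
    have hslope : EqOn (fun z ↦ Λ (slope f z₀ z)) (dslope (fun z ↦ Λ (f z)) z₀) (K \ {z₀}) :=
      fun z hz ↦ by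
        rw [dslope_of_ne _ hz.2]
        exact ((Λ : B →ₗ[ℂ] ℂ).slope_comp f z₀ z).symm
    exact ⟨C, fun z hz w hw ↦ by rw [hslope hz, hslope hw]; exact hC hz.1 hw.1⟩
  obtain ⟨C, hC⟩ := hlip
  have hK : K \ {z₀} ∈ 𝓝[≠] z₀ :=
    sdiff_mem_nhdsWithin_compl (closedBall_mem_nhds _ (half_pos hr)) _
  exact (differentiableAt_of_uniformContinuousOn_slope hK hC.uniformContinuousOn)
    |>.differentiableWithinAt
end
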